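/- Let f ∈ C₀(D) and δ > 0. Then for all but finitely many (s,i) ∈ D, there exists (t,j) ∈ (s,i)⁺ such that |f(s,i) − f(t,j)| < δ. -/

import Mathlib

/-!
Outside a compact set `K` we have `|f| < δ/2`, so it suffices that every point `(s, i)` has a
successor outside `K` and that every point of `D` has a neighbourhood containing at most itself
among the points without a `δ`-close successor. The first holds because the successors
`(s ⌢ n, 1)` are infinitely many points of one level, while a basic set `W(0, t, i)` meets each
level at most once. The second holds because a basic neighbourhood `W(r, t, i)` of a point `q₀`
on which `f` varies by less than `δ/2` contains, with each `(s, j) ≠ q₀`, the successor of `s`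
towards `t`. Both use that the sets `W(r, t, i)` form a basis, which comes down to
`ℓ(v, t) = ℓ(v, u) + ℓ(u, t)` for all `v` in some interval `(r, u]`.
-/

/-- An element of Kurepa's tree `Λ`: an injective function `t : α → ω` with countable
ordinal domain `α` and coinfinite range.  The function is represented as a total function
on ordinals which takes the junk value `0` outside of the domain. -/
structure Lambda : Type 1 where
  toFun : Ordinal.{0} → ℕ
  dom : Ordinal.{0}
  countable : dom.card ≤ Cardinal.aleph0
  inj : ∀ β γ, β < dom → γ < dom → toFun β = toFun γ → β = γ
  coinfinite : {n : ℕ | ∀ β, β < dom → toFun β ≠ n}.Infinite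
  junk : ∀ β, ¬ β < dom → toFun β = 0

/-- The tree order on `Λ`: `s ≼ t` iff `t` extends `s`. -/
def Lambda.le (s t : Lambda) : Prop :=
  s.dom ≤ t.dom ∧ ∀ β, β < s.dom → s.toFun β = t.toFun β

/-- The strict tree order on `Λ`. -/
def Lambda.lt (s t : Lambda) : Prop := Lambda.le s t ∧ s ≠ t

/-- `r ≺ s` for `r ∈ Λ ∪ {0}` (`none` plays the role of the extra least element `0`). -/
def precLt : Option Lambda → Lambda → Prop
  | none, _ => True
  | some r, s => Lambda.lt r s

/-- The interval `(r, t] = {s ∈ Λ : r ≺ s ≼ t}`, with `r ∈ Λ ∪ {0}`. -/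
def lamIoc (r : Option Lambda) (t : Lambda) : Set Lambda :=
  {s | precLt r s ∧ Lambda.le s t}

/-- The position of the minimum of `t` on the ordinal interval `[δ, β)`. -/
noncomputable def minPos (t : Ordinal.{0} → ℕ) (δ β : Ordinal.{0}) : Ordinal.{0} :=
  sInf {ξ | δ ≤ ξ ∧ ξ < β ∧ ∀ η, δ ≤ η → η < β → t ξ ≤ t η}

lemma minPos_lt (t : Ordinal.{0} → ℕ) {δ β : Ordinal.{0}} (h : δ < β) : minPos t δ β < β := by
  have hne : {ξ : Ordinal.{0} | δ ≤ ξ ∧ ξ < β ∧ ∀ η, δ ≤ η → η < β → t ξ ≤ t η}.Nonempty := by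
    have h1 : {n : ℕ | ∃ ξ : Ordinal.{0}, δ ≤ ξ ∧ ξ < β ∧ t ξ = n}.Nonempty :=
      ⟨t δ, δ, le_refl _, h, rfl⟩
    obtain ⟨ξ, hξ1, hξ2, hξ3⟩ := Nat.sInf_mem h1
    refine ⟨ξ, hξ1, hξ2, fun η h1' h2' => ?_⟩
    rw [hξ3]
    exact Nat.sInf_le ⟨η, h1', h2', rfl⟩
  obtain ⟨ξ, hξ⟩ := hne
  calc minPos t δ β ≤ ξ := csInf_le (OrderBot.bddBelow _) hξ
    _ < β := hξ.2.1

/-- The sequence `τ` computed from the starting ordinal `β₀` downwards: `τ` is obtained by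
repeatedly passing from `β` to the position of the minimum of `t` on `[δ, β)`, stopping upon
reaching `δ`.  The resulting finite sequence `(β_k, …, β_1)` is recorded as a list in the
order `[β_k, …, β_1]` (so concatenation of the lists corresponds to `⌢`). -/
noncomputable def tauFrom (δ : Ordinal.{0}) (t : Ordinal.{0} → ℕ) : Ordinal.{0} → List Ordinal.{0} :=
  WellFounded.fix wellFounded_lt
    (fun β IH => if h : δ < β then IH (minPos t δ β) (minPos_lt t h) ++ [minPos t δ β] else [])

/-- The finite sequence `τ(s,t)` of ordinals, for `s ≼ t` in `Λ`. -/
noncomputable def tau (s t : Lambda) : List Ordinal.{0} :=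
  tauFrom s.dom t.toFun t.dom

/-- `ℓ(s,t)`, the length of `τ(s,t)`. -/
noncomputable def ell (s t : Lambda) : ℕ := (tau s t).length

/-- The underlying set of the `Λ`-duplicate: `D = Λ × {1, -1}`. -/
abbrev Dup : Type 1 := Lambda × ℤˣ

/-- The basic open sets `W(r,t,i)` of the `Λ`-duplicate. -/
noncomputable def Wset (r : Option Lambda) (t : Lambda) (i : ℤˣ) : Set Dup :=
  {q | q.1 ∈ lamIoc r t ∧ q.2 = (-1) ^ ell q.1 t * i}

/-- The collection of all basic open sets `W(r,t,i)` with `r ≺ t`. -/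
noncomputable def WBasis : Set (Set Dup) :=
  {S | ∃ (r : Option Lambda) (t : Lambda) (i : ℤˣ), precLt r t ∧ S = Wset r t i}

/-- The topology of the `Λ`-duplicate, generated by the basic sets `W(r,t,i)`. -/
noncomputable instance : TopologicalSpace Dup := TopologicalSpace.generateFrom WBasis

/-- `s⁺`, the set of immediate successors of `s` in `Λ`. -/
def succs (s : Lambda) : Set Lambda :=
  {t | Lambda.lt s t ∧ ∀ u, Lambda.lt s u → Lambda.lt u t → False}

open Set Filter Topology

theorem IsCompact.finite_of_subset_of_forall_nhds_inter_finite {X : Type*} [TopologicalSpace X]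
    {K S : Set X} (hK : IsCompact K) (hSK : S ⊆ K) (hS : ∀ x ∈ K, ∃ U ∈ 𝓝 x, (U ∩ S).Finite) :
    S.Finite := by
  choose! U hU hUS using hS
  obtain ⟨t, htK, hKt⟩ := hK.elim_nhds_subcover U hU
  refine (t.finite_toSet.biUnion fun x hx => hUS x (htK x hx)).subset fun y hy => ?_
  obtain ⟨x, hx, hyx⟩ := mem_iUnion₂.1 (hKt (hSK hy))
  exact mem_iUnion₂.2 ⟨x, hx, hyx, hy⟩

namespace Lambda

variable {s t u v : Lambda}

theorem le_refl (s : Lambda) : s.le s := ⟨le_rfl, fun _ _ => rfl⟩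

theorem le.trans (h₁ : s.le t) (h₂ : t.le u) : s.le u :=
  ⟨h₁.1.trans h₂.1, fun β hβ => (h₁.2 β hβ).trans (h₂.2 β (hβ.trans_le h₁.1))⟩

theorem le.eq_of_dom_le (h : s.le t) (hd : t.dom ≤ s.dom) : s = t := by
  have hdom : s.dom = t.dom := le_antisymm h.1 hd
  have hfun : s.toFun = t.toFun := funext fun β => by
    by_cases hβ : β < s.dom
    · exact h.2 β hβ
    · rw [s.junk β hβ, t.junk β (hdom ▸ hβ)]
  cases s; cases t
  cases hdom; cases hfun
  rfl

theorem lt.dom_lt (h : s.lt t) : s.dom < t.dom :=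
  lt_of_not_ge fun hd => h.2 (h.1.eq_of_dom_le hd)

theorem lt.trans (h₁ : s.lt t) (h₂ : t.lt u) : s.lt u :=
  ⟨h₁.1.trans h₂.1, fun he => (he ▸ h₁.dom_lt.trans h₂.dom_lt).false⟩

theorem le_or_le_of_le_of_le (hs : s.le u) (ht : t.le u) : s.le t ∨ t.le s := by
  rcases le_total s.dom t.dom with h | h
  · exact Or.inl ⟨h, fun β hβ => (hs.2 β hβ).trans (ht.2 β (hβ.trans_le h)).symm⟩
  · exact Or.inr ⟨h, fun β hβ => (ht.2 β hβ).trans (hs.2 β (hβ.trans_le h)).symm⟩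

theorem lt_of_le_of_le_of_dom_lt (hs : s.le u) (ht : t.le u) (h : s.dom < t.dom) : s.lt t := by
  rcases le_or_le_of_le_of_le hs ht with h' | h'
  · exact ⟨h', fun he => (he ▸ h).false⟩
  · exact absurd h'.1 h.not_ge

theorem eq_of_le_of_le_of_dom_eq (hs : s.le u) (ht : t.le u) (h : s.dom = t.dom) : s = t := by
  rcases le_or_le_of_le_of_le hs ht with h' | h'
  · exact h'.eq_of_dom_le h.ge
  · exact (h'.eq_of_dom_le h.le).symm

theorem mem_succs_of_dom_le_succ (h : s.lt t) (ht : t.dom ≤ Order.succ s.dom) : t ∈ succs s :=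
  ⟨h, fun _ hsu hut => (Order.lt_succ_iff.1 (hut.dom_lt.trans_le ht)).not_gt hsu.dom_lt⟩

noncomputable def restrict (t : Lambda) (e : Ordinal.{0}) (he : e ≤ t.dom) : Lambda where
  toFun β := if β < e then t.toFun β else 0
  dom := e
  countable := (Ordinal.card_le_card he).trans t.countable
  inj β γ hβ hγ h := by
    simp only [if_pos hβ, if_pos hγ] at h
    exact t.inj β γ (hβ.trans_le he) (hγ.trans_le he) h
  coinfinite := t.coinfinite.mono fun n hn β hβ => by
    simpa only [if_pos hβ] using hn β (hβ.trans_le he)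
  junk β hβ := if_neg hβ

theorem restrict_le (t : Lambda) (e : Ordinal.{0}) (he : e ≤ t.dom) : (t.restrict e he).le t :=
  ⟨he, fun _ hβ => if_pos hβ⟩

theorem le_restrict {e : Ordinal.{0}} (he : e ≤ t.dom) (h : s.le t) (hs : s.dom ≤ e) :
    s.le (t.restrict e he) :=
  ⟨hs, fun β hβ => (h.2 β hβ).trans (if_pos (hβ.trans_le hs)).symm⟩

theorem restrict_lt {e : Ordinal.{0}} (he : e < t.dom) : (t.restrict e he.le).lt t :=
  lt_of_le_of_le_of_dom_lt (restrict_le t e he.le) (le_refl t) he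

noncomputable def succTowards (h : s.lt t) : Lambda :=
  t.restrict (Order.succ s.dom) (Order.succ_le_of_lt h.dom_lt)

theorem succTowards_le (h : s.lt t) : (succTowards h).le t := restrict_le _ _ _

theorem succTowards_mem_succs (h : s.lt t) : succTowards h ∈ succs s :=
  mem_succs_of_dom_le_succ
    (lt_of_le_of_le_of_dom_lt (le_restrict _ h.1 (Order.le_succ _)) (le_refl _)
      (Order.lt_succ s.dom))
    le_rfl

noncomputable def extend (s : Lambda) (n : ℕ) (hn : ∀ β, β < s.dom → s.toFun β ≠ n) : Lambda where
  toFun β := if β < s.dom then s.toFun β else if β = s.dom then n else 0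
  dom := Order.succ s.dom
  countable := by
    rw [Order.succ_eq_add_one, Ordinal.card_add_one]
    exact Cardinal.add_le_aleph0.2 ⟨s.countable, Cardinal.one_le_aleph0⟩
  inj β γ hβ hγ h := by
    rw [Order.lt_succ_iff] at hβ hγ
    rcases hβ.lt_or_eq with hβ | rfl <;> rcases hγ.lt_or_eq with hγ | rfl
    · simp only [if_pos hβ, if_pos hγ] at h; exact s.inj β γ hβ hγ h
    · simp only [if_pos hβ, lt_irrefl, if_false, if_true] at h; exact absurd h (hn β hβ)
    · simp only [if_pos hγ, lt_irrefl, if_false, if_true] at h; exact absurd h.symm (hn γ hγ)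
    · rfl
  coinfinite := (s.coinfinite.sdiff (finite_singleton n)).mono fun m hm β hβ => by
    rcases (Order.lt_succ_iff.1 hβ).lt_or_eq with hβ | rfl
    · simpa only [if_pos hβ] using hm.1 β hβ
    · simpa only [lt_irrefl, if_false, if_true] using Ne.symm hm.2
  junk β hβ := by
    rw [Order.lt_succ_iff, not_le] at hβ
    simp only [if_neg hβ.not_gt, if_neg hβ.ne']

theorem extend_toFun_dom (s : Lambda) (n : ℕ) (hn : ∀ β, β < s.dom → s.toFun β ≠ n) :
    (s.extend n hn).toFun s.dom = n := by
  simp only [extend, lt_irrefl, if_false, if_true]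

theorem extend_mem_succs (s : Lambda) (n : ℕ) (hn : ∀ β, β < s.dom → s.toFun β ≠ n) :
    s.extend n hn ∈ succs s :=
  mem_succs_of_dom_le_succ
    (lt_of_le_of_le_of_dom_lt ⟨Order.le_succ _, fun _ hβ => (if_pos hβ).symm⟩ (le_refl _)
      (Order.lt_succ s.dom))
    le_rfl

end Lambda

section Tau

variable {c c' : Ordinal.{0} → ℕ} {γ δ e β : Ordinal.{0}} {t u v : Lambda}

theorem minPos_spec (h : δ < β) :
    δ ≤ minPos c δ β ∧ minPos c δ β < β ∧ ∀ η, δ ≤ η → η < β → c (minPos c δ β) ≤ c η := by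
  obtain ⟨ξ, ⟨hδξ, hξβ⟩, hmin⟩ := (InvImage.wf c wellFounded_lt).has_min (Ico δ β) ⟨δ, le_rfl, h⟩
  exact csInf_mem (s := {ξ | δ ≤ ξ ∧ ξ < β ∧ ∀ η, δ ≤ η → η < β → c ξ ≤ c η})
    ⟨ξ, hδξ, hξβ, fun η h₁ h₂ => not_lt.1 (hmin η ⟨h₁, h₂⟩)⟩

theorem minPos_congr (h : ∀ ξ, δ ≤ ξ → ξ < β → c ξ = c' ξ) : minPos c δ β = minPos c' δ β := by
  unfold minPos
  congr 1
  ext ξ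
  refine and_congr_right fun hδξ => and_congr_right fun hξβ => forall₂_congr fun η hδη => ?_
  exact imp_congr_right fun hηβ => by rw [h ξ hδξ hξβ, h η hδη hηβ]

theorem minPos_eq_of_lt_of_forall_lt (hγe : γ ≤ e) (heβ : e < β)
    (hyp : ∀ ξ, γ ≤ ξ → ξ < e → c e < c ξ) : minPos c γ β = minPos c e β := by
  unfold minPos
  congr 1
  ext ξ
  constructor
  · rintro ⟨hγξ, hξβ, hmin⟩
    refine ⟨le_of_not_gt fun hξe => (hyp ξ hγξ hξe).not_ge (hmin e hγe heβ), hξβ,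
      fun η heη hηβ => hmin η (hγe.trans heη) hηβ⟩
  · rintro ⟨heξ, hξβ, hmin⟩
    refine ⟨hγe.trans heξ, hξβ, fun η hγη hηβ => ?_⟩
    rcases lt_or_ge η e with hηe | heη
    · exact (hmin e le_rfl heβ).trans (hyp η hγη hηe).le
    · exact hmin η heη hηβ

theorem tauFrom_eq (δ : Ordinal.{0}) (c : Ordinal.{0} → ℕ) (β : Ordinal.{0}) :
    tauFrom δ c β =
      if δ < β then tauFrom δ c (minPos c δ β) ++ [minPos c δ β] else [] := by
  unfold tauFrom
  exact WellFounded.fix_eq _ _ _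

theorem tauFrom_of_le (c : Ordinal.{0} → ℕ) (h : β ≤ δ) : tauFrom δ c β = [] := by
  rw [tauFrom_eq, if_neg h.not_gt]

theorem tauFrom_congr (h : ∀ ξ, δ ≤ ξ → ξ < β → c ξ = c' ξ) : tauFrom δ c β = tauFrom δ c' β := by
  induction β using WellFoundedLT.induction with
  | _ β ih =>
    by_cases hδβ : δ < β
    · have hmin := minPos_congr h
      have hlt := (minPos_spec (c := c) hδβ).2.1
      rw [tauFrom_eq δ c, tauFrom_eq δ c', if_pos hδβ, if_pos hδβ, ← hmin,
        ih _ hlt fun ξ h₁ h₂ => h ξ h₁ (h₂.trans hlt)]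
    · rw [tauFrom_of_le c (not_lt.1 hδβ), tauFrom_of_le c' (not_lt.1 hδβ)]

theorem tauFrom_append (hγe : γ ≤ e) (hyp : ∀ ξ, γ ≤ ξ → ξ < e → c e < c ξ) (heβ : e ≤ β) :
    tauFrom γ c β = tauFrom γ c e ++ tauFrom e c β := by
  induction β using WellFoundedLT.induction with
  | _ β ih =>
    rcases heβ.lt_or_eq with heβ | rfl
    · have hmin := minPos_eq_of_lt_of_forall_lt hγe heβ hyp
      obtain ⟨hem, hmβ, -⟩ := minPos_spec (c := c) heβ
      rw [tauFrom_eq γ c β, if_pos (hγe.trans_lt heβ), tauFrom_eq e c β, if_pos heβ, hmin,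
        ih _ hmβ hem, List.append_assoc]
    · rw [tauFrom_of_le c le_rfl, List.append_nil]

theorem ell_self (t : Lambda) : ell t t = 0 := by
  simp only [ell, tau, tauFrom_of_le t.toFun le_rfl, List.length_nil]

theorem ell_eq_add (hvu : v.le u) (hut : u.le t)
    (hyp : ∀ ξ, v.dom ≤ ξ → ξ < u.dom → t.toFun u.dom < t.toFun ξ) :
    ell v t = ell v u + ell u t := by
  have hrestr : tauFrom v.dom t.toFun u.dom = tauFrom v.dom u.toFun u.dom :=
    tauFrom_congr fun ξ _ hξ => (hut.2 ξ hξ).symm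
  simp only [ell, tau, tauFrom_append hvu.1 hyp hut.1, List.length_append, hrestr]

/-- Only finitely many `ξ < dom u` have `t ξ ≤ t (dom u)`, by injectivity of `t`; cutting
above the largest of them gives `r`. -/
theorem exists_precLt_forall_lt (hd : u.dom < t.dom) :
    ∃ r, precLt r u ∧ ∀ v, precLt r v → ∀ ξ, v.dom ≤ ξ → ξ < u.dom → t.toFun u.dom < t.toFun ξ := by
  set F := {ξ | ξ < u.dom ∧ t.toFun ξ ≤ t.toFun u.dom}
  have hF : F.Finite := by
    refine Finite.of_finite_image ((finite_Iic (t.toFun u.dom)).subset ?_)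
      fun ξ hξ ξ' hξ' => t.inj ξ ξ' (hξ.1.trans hd) (hξ'.1.trans hd)
    rintro _ ⟨ξ, hξ, rfl⟩
    exact hξ.2
  rcases F.eq_empty_or_nonempty with hFe | hFne
  · refine ⟨none, trivial, fun v _ ξ _ hξ => lt_of_not_ge fun hle => ?_⟩
    exact (hFe ▸ (show ξ ∈ F from ⟨hξ, hle⟩) : ξ ∈ (∅ : Set _))
  · have hmax := hFne.csSup_mem hF
    refine ⟨some (u.restrict (sSup F) hmax.1.le), Lambda.restrict_lt hmax.1,
      fun v hv ξ hvξ hξ => lt_of_not_ge fun hle => ?_⟩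
    have hlt : sSup F < ξ := (hv.dom_lt : sSup F < v.dom).trans_le hvξ
    exact hlt.not_ge (le_csSup hF.bddAbove ⟨hξ, hle⟩)

theorem exists_precLt_ell_eq_add (hut : u.le t) :
    ∃ r, precLt r u ∧ ∀ v, precLt r v → v.le u → ell v t = ell v u + ell u t := by
  rcases lt_or_ge u.dom t.dom with hd | hd
  · obtain ⟨r, hru, hr⟩ := exists_precLt_forall_lt hd
    exact ⟨r, hru, fun v hrv hvu => ell_eq_add hvu hut (hr v hrv)⟩
  · obtain rfl := hut.eq_of_dom_le hd
    exact ⟨none, trivial, fun v _ _ => by rw [ell_self, add_zero]⟩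

end Tau

section Topology

variable {r : Option Lambda} {t u : Lambda} {i : ℤˣ} {p q : Dup}

theorem Wset.eq_of_dom_eq (hp : p ∈ Wset r t i) (hq : q ∈ Wset r t i) (h : p.1.dom = q.1.dom) :
    p = q := by
  have h₁ : p.1 = q.1 := Lambda.eq_of_le_of_le_of_dom_eq hp.1.2 hq.1.2 h
  exact Prod.ext h₁ (by rw [hp.2, hq.2, h₁])

theorem self_mem_Wset (hr : precLt r q.1) : q ∈ Wset r q.1 q.2 :=
  ⟨⟨hr, Lambda.le_refl _⟩, by rw [ell_self, pow_zero, one_mul]⟩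

theorem exists_precLt_forall_precLt_and {a b : Option Lambda} (ha : precLt a u) (hb : precLt b u) :
    ∃ c, precLt c u ∧ ∀ v : Lambda, v.le u → precLt c v → precLt a v ∧ precLt b v := by
  match a, b with
  | none, b => exact ⟨b, hb, fun _ _ h => ⟨trivial, h⟩⟩
  | a, none => exact ⟨a, ha, fun _ _ h => ⟨h, trivial⟩⟩
  | some a, some b =>
    have ha : a.lt u := ha
    have hb : b.lt u := hb
    rcases le_total a.dom b.dom with hab | hab
    · refine ⟨some b, hb, fun v hvu (hbv : b.lt v) => ⟨?_, hbv⟩⟩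
      exact Lambda.lt_of_le_of_le_of_dom_lt ha.1 hvu (hab.trans_lt hbv.dom_lt)
    · refine ⟨some a, ha, fun v hvu (hav : a.lt v) => ⟨hav, ?_⟩⟩
      exact Lambda.lt_of_le_of_le_of_dom_lt hb.1 hvu (hab.trans_lt hav.dom_lt)

theorem exists_precLt_Wset_subset {r₁ : Option Lambda} {t₁ : Lambda} {i₁ : ℤˣ}
    (hq : q ∈ Wset r₁ t₁ i₁) : ∃ r, precLt r q.1 ∧ Wset r q.1 q.2 ⊆ Wset r₁ t₁ i₁ := by
  obtain ⟨⟨hr₁q, hqt₁⟩, hsgn⟩ := hq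
  obtain ⟨r', hr'q, hadd⟩ := exists_precLt_ell_eq_add hqt₁
  obtain ⟨r, hrq, hr⟩ := exists_precLt_forall_precLt_and hr₁q hr'q
  refine ⟨r, hrq, fun v ⟨⟨hrv, hvq⟩, hvsgn⟩ => ?_⟩
  obtain ⟨hr₁v, hr'v⟩ := hr v.1 hvq hrv
  refine ⟨⟨hr₁v, hvq.trans hqt₁⟩, ?_⟩
  rw [hvsgn, hsgn, hadd v.1 hr'v hvq, pow_add, mul_assoc]

theorem Wset_mono {r' : Option Lambda} (h : ∀ v : Lambda, v.le u → precLt r v → precLt r' v) :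
    Wset r u i ⊆ Wset r' u i :=
  fun _ hv => ⟨⟨h _ hv.1.2 hv.1.1, hv.1.2⟩, hv.2⟩

theorem isTopologicalBasis_WBasis : TopologicalSpace.IsTopologicalBasis WBasis := by
  refine ⟨?_, ?_, rfl⟩
  · rintro _ ⟨r₁, t₁, i₁, -, rfl⟩ _ ⟨r₂, t₂, i₂, -, rfl⟩ q ⟨hq₁, hq₂⟩
    obtain ⟨a, ha, hsub₁⟩ := exists_precLt_Wset_subset hq₁
    obtain ⟨b, hb, hsub₂⟩ := exists_precLt_Wset_subset hq₂
    obtain ⟨c, hc, habc⟩ := exists_precLt_forall_precLt_and ha hb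
    exact ⟨Wset c q.1 q.2, ⟨c, q.1, q.2, hc, rfl⟩, self_mem_Wset hc, fun v hv =>
      ⟨hsub₁ (Wset_mono (fun v hvq hcv => (habc v hvq hcv).1) hv),
        hsub₂ (Wset_mono (fun v hvq hcv => (habc v hvq hcv).2) hv)⟩⟩
  · refine sUnion_eq_univ_iff.2 fun q => ⟨Wset none q.1 q.2, ?_, self_mem_Wset trivial⟩
    exact ⟨none, q.1, q.2, trivial, rfl⟩

theorem nhds_hasBasis_Wset (q : Dup) :
    (𝓝 q).HasBasis (fun r => precLt r q.1) (fun r => Wset r q.1 q.2) := by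
  refine ⟨fun U => ⟨fun hU => ?_, fun ⟨r, hr, hsub⟩ => mem_of_superset ?_ hsub⟩⟩
  · obtain ⟨_, ⟨r₁, t₁, i₁, -, rfl⟩, hq, hsub⟩ := isTopologicalBasis_WBasis.mem_nhds_iff.1 hU
    obtain ⟨r, hr, hsub'⟩ := exists_precLt_Wset_subset hq
    exact ⟨r, hr, hsub'.trans hsub⟩
  · exact isTopologicalBasis_WBasis.mem_nhds ⟨r, q.1, q.2, hr, rfl⟩ (self_mem_Wset hr)

/-- The successors `(s ⌢ n, 1)` for the infinitely many `n ∉ ran s` all lie on one level, and a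
basic neighbourhood meets each level in at most one point. -/
theorem exists_succ_not_mem_of_isCompact {K : Set Dup} (hK : IsCompact K) (s : Lambda) :
    ∃ t ∈ succs s, ((t, 1) : Dup) ∉ K := by
  set e := s.coinfinite.natEmbedding
  set g : ℕ → Dup := fun k => (s.extend (e k) (e k).2, 1)
  have hg : Function.Injective g := fun k₁ k₂ h => e.injective <| Subtype.ext <| by
    simpa only [g, Lambda.extend_toFun_dom] using congrArg (fun p : Dup => p.1.toFun s.dom) h
  by_contra! hgK
  refine (infinite_range_of_injective hg) (hK.finite_of_subset_of_forall_nhds_inter_finite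
    (range_subset_iff.2 fun k => hgK _ (Lambda.extend_mem_succs _ _ _)) fun x _ => ?_)
  refine ⟨Wset none x.1 x.2, (nhds_hasBasis_Wset x).mem_of_mem trivial,
    Set.Subsingleton.finite ?_⟩
  rintro _ ⟨hp, k₁, rfl⟩ _ ⟨hq, k₂, rfl⟩
  exact Wset.eq_of_dom_eq hp hq rfl

/-- If `q ≠ q₀` lies in a basic neighbourhood `W(r, q₀)`, then so does the successor of `q.1`
towards `q₀.1`, with the sign that `W(r, q₀)` prescribes. -/
theorem eventually_exists_succ_mem {U : Set Dup} {q₀ : Dup} (hU : U ∈ 𝓝 q₀) :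
    ∀ᶠ q in 𝓝[≠] q₀, ∃ p : Dup, p.1 ∈ succs q.1 ∧ p ∈ U := by
  obtain ⟨r, hr, hWU⟩ := (nhds_hasBasis_Wset q₀).mem_iff.1 hU
  filter_upwards [self_mem_nhdsWithin,
    mem_nhdsWithin_of_mem_nhds ((nhds_hasBasis_Wset q₀).mem_of_mem hr)] with q hqq₀ hqW
  have hlt : q.1.lt q₀.1 := Lambda.lt_of_le_of_le_of_dom_lt hqW.1.2 (Lambda.le_refl _)
    (hqW.1.2.1.lt_of_ne fun hd => hqq₀ (Wset.eq_of_dom_eq hqW (self_mem_Wset hr) hd))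
  set t' := Lambda.succTowards hlt
  have hrt' : precLt r t' := by
    cases r with
    | none => trivial
    | some r => exact (hqW.1.1 : r.lt q.1).trans (Lambda.succTowards_mem_succs hlt).1
  exact ⟨(t', (-1) ^ ell t' q₀.1 * q₀.2), Lambda.succTowards_mem_succs hlt,
    hWU ⟨⟨hrt', Lambda.succTowards_le hlt⟩, rfl⟩⟩

end Topology

/-- For `f ∈ C₀(D)` and `δ > 0`, for all but finitely many `(s,i) ∈ D` there exists
`(t,j) ∈ (s,i)⁺` with `|f(s,i) - f(t,j)| < δ`. -/
theorem cofinitely_close_successor (f : ZeroAtInftyContinuousMap Dup ℝ)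
    (δ : ℝ) (hδ : 0 < δ) :
    {q : Dup | ¬ ∃ p : Dup, p.1 ∈ succs q.1 ∧ |f q - f p| < δ}.Finite := by
  set B := {q : Dup | ¬ ∃ p : Dup, p.1 ∈ succs q.1 ∧ |f q - f p| < δ}
  obtain ⟨K, hK, hfK⟩ : ∃ K, IsCompact K ∧ ∀ q ∉ K, |f q| < δ / 2 := by
    obtain ⟨K, hK, hKf⟩ := mem_cocompact.1
      ((zero_at_infty f).eventually (Metric.ball_mem_nhds 0 (half_pos hδ)))
    exact ⟨K, hK, fun q hq => by simpa using hKf hq⟩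
  have hBK : B ⊆ K := fun q hq => by_contra fun hqK => by
    obtain ⟨t, ht, htK⟩ := exists_succ_not_mem_of_isCompact hK q.1
    refine hq ⟨(t, 1), ht, (abs_sub _ _).trans_lt ?_⟩
    linarith [hfK q hqK, hfK _ htK]
  refine hK.finite_of_subset_of_forall_nhds_inter_finite hBK fun q₀ _ => ?_
  have hball : f ⁻¹' Metric.ball (f q₀) (δ / 2) ∈ 𝓝 q₀ :=
    (map_continuous f).continuousAt.preimage_mem_nhds (Metric.ball_mem_nhds _ (half_pos hδ))
  have hgood : ∀ᶠ q in 𝓝[≠] q₀, q ∉ B := by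
    filter_upwards [eventually_exists_succ_mem hball, mem_nhdsWithin_of_mem_nhds hball]
      with q ⟨p, hp, hpU⟩ hqU hqB
    refine hqB ⟨p, hp, ?_⟩
    have hpq₀ : dist (f p) (f q₀) < δ / 2 := hpU
    have hqq₀ : dist (f q) (f q₀) < δ / 2 := hqU
    rw [← Real.dist_eq]
    linarith [dist_triangle_right (f q) (f p) (f q₀)]
  refine ⟨{q | q ≠ q₀ → q ∉ B}, eventually_nhdsWithin_iff.1 hgood, (finite_singleton q₀).subset ?_⟩
  exact fun q ⟨hq, hqB⟩ => by_contra fun hqq₀ => hq hqq₀ hqB
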